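/- For n ≥ 4, the convex hull of the set of circuits on values v_1 < v_2 < ... < v_n (points x in R^n such that the map sending v_i to x_i defines a single n-cycle on {v_1,...,v_n}) has affine dimension exactly n−1. -/

import Mathlib

/-!
Every circuit is a permutation of `v`, so all circuits lie in the hyperplane `∑ xᵢ = ∑ vᵢ`, and
the point is that they span it affinely. Write `ρ` for the rotation `i ↦ i + 1`, `eᵢ` for the
standard basis and `f_j = e_j - e_{j+1}`. Each `v ∘ (g ρ g⁻¹)` is a circuit. Conjugating `ρ` by
the transposition `(s s+1)` moves `v ∘ ρ` by `(v_{s+1} - v_s) f_{s-1} + (v_{s+2} - v_s) f_s`.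
The first coefficient is nonzero, so if `f_s` is in the span then so is `f_{s-1}`. To get a first
`f_s`, also conjugate by `(s s+2)`. A combination of three such differences is `K f_s` with
`K = (v_{s+1} - v_s)(v_{s+3} - v_{s+2}) - (v_{s+2} - v_s)(v_{s+2} - v_{s+1})`. At `s = n - 3`,
where `v_{s+3} = v_0` wraps around, the signs force `K < 0`. Going down from there gives every
`f_j`, and the `f_j` span the hyperplane.
-/

/-- A circuit on `{1,...,n}`: a permutation of `Fin n` that is a single `n`-cycle. -/
def IsCircuitPerm {n : ℕ} (σ : Equiv.Perm (Fin n)) : Prop :=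
  σ.IsCycle ∧ σ.support = Finset.univ

/-- A circuit point on values `v`: `x i = v (σ i)` for some single-`n`-cycle permutation `σ`. -/
def IsCircuitPt {n : ℕ} (v : Fin n → ℝ) (x : Fin n → ℝ) : Prop :=
  ∃ σ : Equiv.Perm (Fin n), IsCircuitPerm σ ∧ ∀ i, x i = v (σ i)

open Equiv Finset LinearMap Submodule

theorem vectorSpan_convexHull {𝕜 E : Type*} [Field 𝕜] [LinearOrder 𝕜] [IsStrictOrderedRing 𝕜]
    [AddCommGroup E] [Module 𝕜 E] (s : Set E) :
    vectorSpan 𝕜 (convexHull 𝕜 s) = vectorSpan 𝕜 s := by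
  rw [← direction_affineSpan, affineSpan_convexHull, direction_affineSpan]

theorem ker_sum_proj_le_of_single_sub_single_mem {R ι : Type*} [CommRing R] [Fintype ι]
    [DecidableEq ι] {W : Submodule R (ι → R)} (i₀ : ι)
    (h : ∀ i, Pi.single i 1 - Pi.single i₀ 1 ∈ W) :
    ker (∑ i, proj i : (ι → R) →ₗ[R] R) ≤ W := by
  intro x hx
  have hsum : ∑ i, x i = 0 := by simpa using hx
  have hx_eq : x = ∑ i, x i • (Pi.single i 1 - Pi.single i₀ 1 : ι → R) := by
    simp only [smul_sub, sum_sub_distrib, ← sum_smul, hsum, zero_smul, sub_zero]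
    exact pi_eq_sum_univ' x
  rw [hx_eq]
  exact W.sum_mem fun i _ => W.smul_mem _ (h i)

theorem finrank_ker_sum_proj {K ι : Type*} [Field K] [Fintype ι] [Nonempty ι] :
    Module.finrank K (ker (∑ i, proj i : (ι → K) →ₗ[K] K)) = Fintype.card ι - 1 := by
  classical
  have hne : (∑ i, proj i : (ι → K) →ₗ[K] K) ≠ 0 := fun h => by
    simpa using LinearMap.congr_fun h (Pi.single (Classical.arbitrary ι) 1)
  have h := Module.Dual.finrank_ker_add_one_of_ne_zero hne
  rw [Module.finrank_fintype_fun_eq_card] at h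
  omega

namespace Fin

variable {n : ℕ} [NeZero n]

theorem ofNat_ne_zero_of_lt {k : ℕ} [k.AtLeastTwo] (h : k < n) :
    (OfNat.ofNat k : Fin n) ≠ 0 := by
  rw [Ne, Fin.ext_iff, Fin.coe_ofNat_eq_mod, Fin.val_zero]
  change ¬k % n = 0
  rw [Nat.mod_eq_of_lt h]
  exact NeZero.ne k

open Fin.NatCast in
@[elab_as_elim]
theorem induction_sub_one {P : Fin n → Prop} (j s : Fin n) (hs : P s)
    (h : ∀ t, P t → P (t - 1)) : P j := by
  have hk : ∀ k : ℕ, P (s - k) := by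
    intro k
    induction k with
    | zero => simpa using hs
    | succ k ih => simpa [sub_sub] using h _ ih
  simpa using hk (s - j).val

end Fin

namespace HamiltonianCircuit

variable {n : ℕ} (v : Fin n → ℝ)

def circuitSpan : Submodule ℝ (Fin n → ℝ) := vectorSpan ℝ {x | IsCircuitPt v x}

theorem sum_eq_of_isCircuitPt {x : Fin n → ℝ} (hx : IsCircuitPt v x) :
    ∑ i, x i = ∑ i, v i := by
  obtain ⟨σ, -, hσ⟩ := hx
  simp only [hσ]
  exact Equiv.sum_comp σ v

theorem circuitSpan_le_ker_sum_proj :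
    circuitSpan v ≤ ker (∑ i, proj i : (Fin n → ℝ) →ₗ[ℝ] ℝ) := by
  rw [circuitSpan, vectorSpan_def, span_le]
  rintro _ ⟨x, hx, y, hy, rfl⟩
  simp [sum_sub_distrib, sum_eq_of_isCircuitPt v hx, sum_eq_of_isCircuitPt v hy]

theorem isCircuitPt_comp_conj_finRotate (hn : 2 ≤ n) (g : Perm (Fin n)) :
    IsCircuitPt v (v ∘ ⇑(g * finRotate n * g⁻¹)) :=
  ⟨_, ⟨(isCycle_finRotate_of_le hn).conj, by
    rw [Perm.support_conj, support_finRotate_of_le hn, map_univ_equiv]⟩, fun _ => rfl⟩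

theorem comp_conj_swap_sub_mem_circuitSpan (hn : 2 ≤ n) (a b : Fin n) :
    v ∘ ⇑(swap a b * finRotate n * swap a b) - v ∘ finRotate n ∈ circuitSpan v := by
  rw [circuitSpan]
  simpa using vsub_mem_vectorSpan ℝ (s := {x | IsCircuitPt v x})
    (isCircuitPt_comp_conj_finRotate v hn (swap a b)) (isCircuitPt_comp_conj_finRotate v hn 1)

variable [NeZero n]

def cyclicEdge (j : Fin n) : Fin n → ℝ := Pi.single j 1 - Pi.single (j + 1) 1

theorem comp_conj_swap_add_one_sub (hn : 3 ≤ n) (s : Fin n) :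
    v ∘ ⇑(swap s (s + 1) * finRotate n * swap s (s + 1)) - v ∘ finRotate n
      = (v (s + 1) - v s) • cyclicEdge (s - 1) + (v (s + 2) - v s) • cyclicEdge s := by
  have : (2 : Fin n) ≠ 0 := Fin.ofNat_ne_zero_of_lt hn
  ext i
  simp only [Pi.sub_apply, Pi.add_apply, Pi.smul_apply, smul_eq_mul, Function.comp_apply,
    Perm.mul_apply, finRotate_apply, cyclicEdge, Pi.single_apply, swap_apply_def]
  split_ifs <;> grind

theorem comp_conj_swap_add_two_sub (hn : 4 ≤ n) (s : Fin n) :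
    v ∘ ⇑(swap s (s + 2) * finRotate n * swap s (s + 2)) - v ∘ finRotate n
      = (v (s + 2) - v s) • cyclicEdge (s - 1)
        + (v (s + 2) - v s + (v (s + 3) - v (s + 1))) • cyclicEdge s
        + (v (s + 3) - v (s + 1)) • cyclicEdge (s + 1) := by
  have : (2 : Fin n) ≠ 0 := Fin.ofNat_ne_zero_of_lt (show 2 < n by omega)
  have : (3 : Fin n) ≠ 0 := Fin.ofNat_ne_zero_of_lt hn
  ext i
  simp only [Pi.sub_apply, Pi.add_apply, Pi.smul_apply, smul_eq_mul, Function.comp_apply,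
    Perm.mul_apply, finRotate_apply, cyclicEdge, Pi.single_apply, swap_apply_def]
  split_ifs <;> grind

theorem cyclicEdge_sub_one_mem (hn : 3 ≤ n) (hv : Function.Injective v) {s : Fin n}
    (hs : cyclicEdge s ∈ circuitSpan v) : cyclicEdge (s - 1) ∈ circuitSpan v := by
  have h := comp_conj_swap_sub_mem_circuitSpan v (by omega) s (s + 1)
  rw [comp_conj_swap_add_one_sub v hn] at h
  have h1 : (1 : Fin n) ≠ 0 := by
    rw [Ne, Fin.ext_iff, Fin.val_one', Fin.val_zero, Nat.mod_eq_of_lt (by omega)]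
    exact one_ne_zero
  have hgap : v (s + 1) - v s ≠ 0 := sub_ne_zero.2 (hv.ne (add_ne_left.2 h1))
  exact (smul_mem_iff _ hgap).1 ((Submodule.add_mem_iff_left _ (smul_mem _ _ hs)).1 h)

theorem smul_cyclicEdge_mem (hn : 4 ≤ n) (s : Fin n) :
    ((v (s + 1) - v s) * (v (s + 3) - v (s + 2)) - (v (s + 2) - v s) * (v (s + 2) - v (s + 1)))
      • cyclicEdge s ∈ circuitSpan v := by
  have hA := comp_conj_swap_sub_mem_circuitSpan v (by omega) s (s + 1)
  have hA' := comp_conj_swap_sub_mem_circuitSpan v (by omega) (s + 1) (s + 1 + 1)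
  have hB := comp_conj_swap_sub_mem_circuitSpan v (by omega) s (s + 2)
  rw [comp_conj_swap_add_one_sub v (by omega)] at hA hA'
  rw [comp_conj_swap_add_two_sub v hn] at hB
  rw [show s + 1 - 1 = s by abel, show s + 1 + 1 = s + 2 by grind,
    show s + 1 + 2 = s + 3 by grind] at hA'
  convert sub_mem (sub_mem (smul_mem _ (v (s + 1) - v s) hB) (smul_mem _ (v (s + 2) - v s) hA))
    (smul_mem _ (v (s + 1) - v s) hA') using 1
  module

theorem cyclicEdge_mem_of_strictMono (hn : 4 ≤ n) (hv : StrictMono v) (j : Fin n) :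
    cyclicEdge j ∈ circuitSpan v := by
  set s : Fin n := ⟨n - 3, by omega⟩
  have h1 : s + 1 = ⟨n - 2, by omega⟩ := by
    ext
    simp only [s, Fin.val_add, Fin.val_one']
    rw [Nat.one_mod_eq_one.2 (by omega), Nat.mod_eq_of_lt (by omega)]
    omega
  have h2 : s + 2 = ⟨n - 1, by omega⟩ := by
    ext
    simp only [s, Fin.val_add, Fin.coe_ofNat_eq_mod]
    rw [Nat.mod_eq_of_lt (show 2 < n by omega), Nat.mod_eq_of_lt (by omega)]
    omega
  have h3 : s + 3 = 0 := by
    ext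
    simp only [s, Fin.val_add, Fin.coe_ofNat_eq_mod]
    rw [Nat.mod_eq_of_lt (show 3 < n by omega), Nat.sub_add_cancel (by omega), Nat.mod_self,
      Nat.zero_mod]
  have h01 : v s < v (s + 1) := by rw [h1]; exact hv (Fin.mk_lt_mk.2 (by omega))
  have h12 : v (s + 1) < v (s + 2) := by rw [h1, h2]; exact hv (Fin.mk_lt_mk.2 (by omega))
  have h32 : v (s + 3) < v (s + 2) := by
    rw [h3, h2]; exact hv (Fin.lt_def.2 (by simp only [Fin.val_zero]; omega))
  -- the wrap-around `v (s + 3) = v 0` is the only descent, and it makes the coefficient negative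
  have hK : (v (s + 1) - v s) * (v (s + 3) - v (s + 2))
      - (v (s + 2) - v s) * (v (s + 2) - v (s + 1)) < 0 := by nlinarith
  have hs : cyclicEdge s ∈ circuitSpan v := (smul_mem_iff _ hK.ne).1 (smul_cyclicEdge_mem v hn s)
  exact Fin.induction_sub_one j s hs fun _ => cyclicEdge_sub_one_mem v (by omega) hv.injective

theorem single_sub_single_zero_mem (hn : 4 ≤ n) (hv : StrictMono v) (i : Fin n) :
    Pi.single i 1 - Pi.single 0 1 ∈ circuitSpan v := by
  have h0 : Pi.single 0 1 - Pi.single 0 1 ∈ circuitSpan v := by rw [sub_self]; exact zero_mem _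
  refine Fin.induction_sub_one i 0 h0 fun t ht => ?_
  have h := add_mem (cyclicEdge_mem_of_strictMono v hn hv (t - 1)) ht
  rwa [cyclicEdge, sub_add_cancel, sub_add_sub_cancel] at h

theorem circuitSpan_eq_ker_sum_proj (hn : 4 ≤ n) (hv : StrictMono v) :
    circuitSpan v = ker (∑ i, proj i : (Fin n → ℝ) →ₗ[ℝ] ℝ) :=
  le_antisymm (circuitSpan_le_ker_sum_proj v)
    (ker_sum_proj_le_of_single_sub_single_mem 0 (single_sub_single_zero_mem v hn hv))

end HamiltonianCircuit

open HamiltonianCircuit in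
/-- For `n ≥ 4`, the convex hull of the set of circuits on values `v_1 < ⋯ < v_n`
has affine dimension exactly `n − 1`. -/
theorem stmt_1 (n : ℕ) (hn : 4 ≤ n) (v : Fin n → ℝ) (hv : StrictMono v) :
    Module.finrank ℝ
        (vectorSpan ℝ (convexHull ℝ {x : Fin n → ℝ | IsCircuitPt v x})) = n - 1 := by
  have : NeZero n := ⟨by omega⟩
  rw [vectorSpan_convexHull, ← circuitSpan, circuitSpan_eq_ker_sum_proj v hn hv,
    finrank_ker_sum_proj, Fintype.card_fin]
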